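/- arXiv:2212.01031 — 6 statements merged into one kernel-verified Lean document; each statement's English description precedes it below -/
import Mathlib

section
/- There exists a graph G on 4 vertices and two binary edge-weight functions w1, w2 such that the maximin share of each agent equals 1, but in every partition of the vertices into two bundles (X1, X2), at least one agent i has maximum-matching value 0 in her induced subgraph G[Xi]. Consequently no allocation achieves any positive multiplicative approximation of MMS. -/
open Finset

variable {V : Type*} [Fintype V] [DecidableEq V]

/-- `M` is a matching of `G` using only vertices in `S`. -/
def IsMatchingOn (G : SimpleGraph V) (S : Set V) (M : Finset (Sym2 V)) : Prop :=
  (∀ e ∈ M, e ∈ G.edgeSet) ∧ (∀ e ∈ M, ∀ v ∈ e, v ∈ S) ∧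
    (∀ e ∈ M, ∀ f ∈ M, e ≠ f → ∀ v : V, v ∈ e → v ∉ f)

/-- total weight of a set of edges -/
noncomputable def matchWeight (w : Sym2 V → ℝ) (M : Finset (Sym2 V)) : ℝ :=
  ∑ e ∈ M, w e

/-- maximum weight of a matching within the induced subgraph `G[S]` -/
noncomputable def util (G : SimpleGraph V) (w : Sym2 V → ℝ) (S : Set V) : ℝ :=
  sSup {x | ∃ M : Finset (Sym2 V), IsMatchingOn G S M ∧ x = matchWeight w M}

/-- `M` is a maximum-weight matching of `G`. -/
def IsMaxMatching (G : SimpleGraph V) (w : Sym2 V → ℝ) (M : Finset (Sym2 V)) : Prop :=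
  IsMatchingOn G Set.univ M ∧
    ∀ M' : Finset (Sym2 V), IsMatchingOn G Set.univ M' → matchWeight w M' ≤ matchWeight w M

/-- an `n`-partition of the vertex set -/
def IsPartition (n : ℕ) (X : Fin n → Set V) : Prop :=
  (∀ i j, i ≠ j → Disjoint (X i) (X j)) ∧ (⋃ i, X i) = Set.univ

/-- maximin share for identical utility `util G w` among `n` agents -/
noncomputable def MMS (G : SimpleGraph V) (w : Sym2 V → ℝ) (n : ℕ) : ℝ :=
  sSup {x | ∃ X : Fin n → Set V, IsPartition n X ∧ x = ⨅ i, util G w (X i)}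

/-- an index of a bundle of minimum current weight -/
noncomputable def minIdx {n : ℕ} [NeZero n] (w : Sym2 V → ℝ)
    (P : Fin n → Finset (Sym2 V)) : Fin n :=
  Classical.choose (Finset.exists_min_image Finset.univ
    (fun i => matchWeight w (P i)) ⟨0, Finset.mem_univ 0⟩)

/-- process a list of edges, adding each to a currently lightest bundle -/
noncomputable def greedyAux {n : ℕ} [NeZero n] (w : Sym2 V → ℝ) :
    List (Sym2 V) → (Fin n → Finset (Sym2 V)) → (Fin n → Finset (Sym2 V))
  | [], P => P
  | e :: es, P => greedyAux w es (Function.update P (minIdx w P) (insert e (P (minIdx w P))))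

/-- `P` is a greedy partition of the matching `M` into `n` bundles,
relabelled so that weights are non-increasing. -/
def IsGreedyPartition {n : ℕ} [NeZero n] (w : Sym2 V → ℝ) (M : Finset (Sym2 V))
    (P : Fin n → Finset (Sym2 V)) : Prop :=
  ∃ (L : List (Sym2 V)) (σ : Equiv.Perm (Fin n)),
    L.Nodup ∧ L.toFinset = M ∧ L.Pairwise (fun a b => w b ≤ w a) ∧
    P = (greedyAux w L (fun _ => (∅ : Finset (Sym2 V)))) ∘ σ ∧
    ∀ i j : Fin n, i ≤ j → matchWeight w (P j) ≤ matchWeight w (P i)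

/-- vertices touched by a set of edges -/
def verts (M : Finset (Sym2 V)) : Set V := {v | ∃ e ∈ M, v ∈ e}

/-- envy-freeness up to one item -/
def EF1Alloc {n : ℕ} (G : SimpleGraph V) (w : Fin n → Sym2 V → ℝ)
    (X : Fin n → Set V) : Prop :=
  ∀ i j : Fin n, i ≠ j → ∃ g : V, util G (w i) (X j \ {g}) ≤ util G (w i) (X i)

/-- agent `i` envies bundle `j` for more than one item (EF1-graph edge) -/
def MoreThanOneEnvy {n : ℕ} (G : SimpleGraph V) (w : Sym2 V → ℝ)
    (X : Fin n → Set V) (i j : Fin n) : Prop :=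
  (X j).Nonempty ∧ ∀ v ∈ X j, util G w (X i) < util G w (X j \ {v})


section AuxStmt0
set_option linter.unusedSectionVars false

lemma matchWeight_le' {w : Sym2 V → ℝ} (hw : ∀ e, w e = 0 ∨ w e = 1)
    {M E₀ : Finset (Sym2 V)} (hM : ∀ e ∈ M, w e ≠ 0 → e ∈ E₀) :
    matchWeight w M ≤ E₀.card := by
  unfold matchWeight
  rw [← Finset.sum_filter_ne_zero]
  have hsub : M.filter (fun e => w e ≠ 0) ⊆ E₀ := fun e he => by
    simp only [Finset.mem_filter] at he; exact hM e he.1 he.2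
  calc ∑ e ∈ M.filter (fun e => w e ≠ 0), w e
      ≤ ∑ e ∈ E₀, w e := Finset.sum_le_sum_of_subset_of_nonneg hsub
        (fun e _ _ => by rcases hw e with h|h <;> simp [h])
    _ ≤ ∑ e ∈ E₀, 1 := Finset.sum_le_sum (fun e _ => by rcases hw e with h|h <;> simp [h])
    _ = E₀.card := by simp

lemma util_bddAbove' (G : SimpleGraph V) {w : Sym2 V → ℝ} (hw : ∀ e, w e = 0 ∨ w e = 1)
    (E₀ : Finset (Sym2 V)) (hE : ∀ e, w e ≠ 0 → e ∈ E₀) (S : Set V) :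
    BddAbove {x | ∃ M, IsMatchingOn G S M ∧ x = matchWeight w M} :=
  ⟨E₀.card, fun _x ⟨_M, _, hx⟩ => hx ▸ matchWeight_le' hw (fun e _ => hE e)⟩

lemma util_nonneg' (G : SimpleGraph V) {w : Sym2 V → ℝ} (hw : ∀ e, w e = 0 ∨ w e = 1)
    (E₀ : Finset (Sym2 V)) (hE : ∀ e, w e ≠ 0 → e ∈ E₀) (S : Set V) :
    0 ≤ util G w S := by
  apply le_csSup (util_bddAbove' G hw E₀ hE S)
  exact ⟨∅, ⟨by simp, by simp, by simp⟩, by simp [matchWeight]⟩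

lemma util_le' (G : SimpleGraph V) {w : Sym2 V → ℝ} (hw : ∀ e, w e = 0 ∨ w e = 1)
    (S : Set V) (E₀ : Finset (Sym2 V))
    (hE : ∀ e, w e ≠ 0 → (∀ v ∈ e, v ∈ S) → e ∈ E₀) :
    util G w S ≤ E₀.card := by
  apply Real.sSup_le
  · rintro x ⟨M, hM, rfl⟩
    exact matchWeight_le' hw fun e he hne => hE e hne (hM.2.1 e he)
  · positivity

lemma le_util' (G : SimpleGraph V) {w : Sym2 V → ℝ} (hw : ∀ e, w e = 0 ∨ w e = 1)
    (E₀ : Finset (Sym2 V)) (hE : ∀ e, w e ≠ 0 → e ∈ E₀)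
    {S : Set V} {e : Sym2 V} (heG : e ∈ G.edgeSet) (hv : ∀ v ∈ e, v ∈ S) :
    w e ≤ util G w S := by
  apply le_csSup (util_bddAbove' G hw E₀ hE S)
  refine ⟨{e}, ⟨by simpa, by simpa, ?_⟩, by simp [matchWeight]⟩
  intro a ha f hf hne
  simp only [Finset.mem_singleton] at ha hf
  subst ha; subst hf; exact absurd rfl hne

lemma util_eq_zero' (G : SimpleGraph V) {w : Sym2 V → ℝ} (hw : ∀ e, w e = 0 ∨ w e = 1)
    (E₀ : Finset (Sym2 V)) (hE : ∀ e, w e ≠ 0 → e ∈ E₀) {S : Set V}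
    (h : ∀ e, w e ≠ 0 → ¬ (∀ v ∈ e, v ∈ S)) : util G w S = 0 :=
  le_antisymm (by simpa using util_le' G hw S ∅ (fun e hne hv => absurd hv (h e hne)))
    (util_nonneg' G hw E₀ hE S)

lemma util_eq_one' (G : SimpleGraph V) {w : Sym2 V → ℝ} (hw : ∀ e, w e = 0 ∨ w e = 1)
    (E₀ : Finset (Sym2 V)) (hE : ∀ e, w e ≠ 0 → e ∈ E₀)
    {S : Set V} {e₀ : Sym2 V}
    (h1 : w e₀ = 1) (heG : e₀ ∈ G.edgeSet) (hv : ∀ v ∈ e₀, v ∈ S)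
    (huniq : ∀ e, w e ≠ 0 → (∀ v ∈ e, v ∈ S) → e = e₀) :
    util G w S = 1 :=
  le_antisymm (by simpa using util_le' G hw S {e₀} (fun e h h' => by simp [huniq e h h']))
    (h1 ▸ le_util' G hw E₀ hE heG hv)

end AuxStmt0

lemma mms_eq_one' (w : Sym2 (Fin 4) → ℝ) (hw : ∀ e, w e = 0 ∨ w e = 1)
    (p q r s : Fin 4)
    (hpq : p ≠ q) (hrs : r ≠ s) (hpr : p ≠ r) (hps : p ≠ s) (hqr : q ≠ r) (hqs : q ≠ s)
    (hcov : ∀ v : Fin 4, v = p ∨ v = q ∨ v = r ∨ v = s)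
    (hpos : ∀ e, w e ≠ 0 ↔ e = s(p,q) ∨ e = s(r,s))
    (h1 : w s(p,q) = 1) (h2 : w s(r,s) = 1) :
    MMS (⊤ : SimpleGraph (Fin 4)) w 2 = 1 := by
  set G : SimpleGraph (Fin 4) := ⊤ with hG
  have hE : ∀ e, w e ≠ 0 → e ∈ ({s(p,q), s(r,s)} : Finset (Sym2 (Fin 4))) := by
    intro e he; rcases (hpos e).mp he with h|h <;> simp [h]
  have hcard2 : (({s(p,q), s(r,s)} : Finset (Sym2 (Fin 4))).card : ℝ) ≤ 2 := by
    have := Finset.card_insert_le s(p,q) ({s(r,s)} : Finset (Sym2 (Fin 4)))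
    simp at this ⊢
    exact_mod_cast this
  have hub : ∀ S : Set (Fin 4), util G w S ≤ 2 :=
    fun S => le_trans (util_le' G hw S {s(p,q), s(r,s)} (fun e he _ => hE e he)) hcard2
  have hbddA : BddAbove {x | ∃ X : Fin 2 → Set (Fin 4), IsPartition 2 X ∧
      x = ⨅ i, util G w (X i)} := by
    refine ⟨2, ?_⟩
    rintro x ⟨X, hX, rfl⟩
    have hbb : BddBelow (Set.range fun i : Fin 2 => util G w (X i)) :=
      (Set.finite_range _).bddBelow
    exact le_trans (ciInf_le hbb 0) (hub (X 0))
  have hinf_le : ∀ (X : Fin 2 → Set (Fin 4)) (i : Fin 2),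
      (⨅ j, util G w (X j)) ≤ util G w (X i) := by
    intro X i
    exact ciInf_le ((Set.finite_range _).bddBelow) i
  unfold MMS
  apply le_antisymm
  · apply Real.sSup_le
    · rintro x ⟨X, hX, rfl⟩
      by_cases hall : ∀ v : Fin 4, v ∈ X 0
      · have hz : util G w (X 1) = 0 := by
          apply util_eq_zero' G hw _ hE
          intro e he hv
          have hd := Set.disjoint_left.mp (hX.1 0 1 (by decide))
          rcases (hpos e).mp he with rfl|rfl
          · exact hd (hall p) (hv p (Sym2.mem_mk_left p q))
          · exact hd (hall r) (hv r (Sym2.mem_mk_left r s))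
        exact le_trans (hinf_le X 1) (by rw [hz]; norm_num)
      · push_neg at hall
        obtain ⟨v, hv⟩ := hall
        have key : util G w (X 0) ≤ 1 := by
          rcases hcov v with rfl|rfl|rfl|rfl
          · have := util_le' G hw (X 0) {s(r,s)} (by
              intro e he hmem
              rcases (hpos e).mp he with rfl|rfl
              · exact absurd (hmem v (Sym2.mem_mk_left v q)) hv
              · simp)
            simpa using this
          · have := util_le' G hw (X 0) {s(r,s)} (by
              intro e he hmem
              rcases (hpos e).mp he with rfl|rfl
              · exact absurd (hmem v (Sym2.mem_mk_right p v)) hv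
              · simp)
            simpa using this
          · have := util_le' G hw (X 0) {s(p,q)} (by
              intro e he hmem
              rcases (hpos e).mp he with rfl|rfl
              · simp
              · exact absurd (hmem v (Sym2.mem_mk_left v s)) hv)
            simpa using this
          · have := util_le' G hw (X 0) {s(p,q)} (by
              intro e he hmem
              rcases (hpos e).mp he with rfl|rfl
              · simp
              · exact absurd (hmem v (Sym2.mem_mk_right r v)) hv)
            simpa using this
        exact le_trans (hinf_le X 0) key
    · norm_num
  · apply le_csSup hbddA
    refine ⟨![{p,q}, {r,s}], ⟨?_, ?_⟩, ?_⟩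
    · intro i j hij
      have hd : Disjoint ({p,q} : Set (Fin 4)) {r,s} := by
        rw [Set.disjoint_left]
        rintro a (rfl|rfl) (h|h) <;> simp_all
      fin_cases i <;> fin_cases j <;> simp_all <;> exact hd.symm
    · ext v
      simp only [Set.mem_iUnion, Set.mem_univ, iff_true, Fin.exists_fin_two]
      rcases hcov v with rfl|rfl|rfl|rfl <;> simp [Matrix.cons_val_zero, Matrix.cons_val_one]
    · have hu0 : util G w {p,q} = 1 := by
        apply util_eq_one' G hw _ hE h1
        · rw [SimpleGraph.mem_edgeSet]; exact hpq
        · intro v hv; rw [Sym2.mem_iff] at hv; rcases hv with rfl|rfl <;> simp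
        · intro e he hmem
          rcases (hpos e).mp he with rfl|rfl
          · rfl
          · have := hmem r (Sym2.mem_mk_left r s)
            rcases this with h|h <;> simp_all
      have hu1 : util G w {r,s} = 1 := by
        apply util_eq_one' G hw _ hE h2
        · rw [SimpleGraph.mem_edgeSet]; exact hrs
        · intro v hv; rw [Sym2.mem_iff] at hv; rcases hv with rfl|rfl <;> simp
        · intro e he hmem
          rcases (hpos e).mp he with rfl|rfl
          · have := hmem p (Sym2.mem_mk_left p q)
            rcases this with h|h <;> simp_all
          · rfl
      have hconst : (fun i : Fin 2 => util G w (![{p,q}, {r,s}] i)) = fun _ => 1 := by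
        funext i; fin_cases i
        · simpa using hu0
        · simpa using hu1
      rw [show (⨅ i, util G w (![{p,q}, {r,s}] i)) = ⨅ _i : Fin 2, (1:ℝ) from by rw [hconst]]
      exact (ciInf_const).symm

noncomputable def wA' : Sym2 (Fin 4) → ℝ := fun e => if e = s(0,1) ∨ e = s(2,3) then 1 else 0
noncomputable def wB' : Sym2 (Fin 4) → ℝ := fun e => if e = s(0,2) ∨ e = s(1,3) then 1 else 0

lemma wA01' : ∀ e, wA' e = 0 ∨ wA' e = 1 := fun e => by unfold wA'; split <;> simp
lemma wB01' : ∀ e, wB' e = 0 ∨ wB' e = 1 := fun e => by unfold wB'; split <;> simp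
lemma wA_pos' : ∀ e, wA' e ≠ 0 ↔ e = s(0,1) ∨ e = s(2,3) := fun e => by
  unfold wA'; split <;> simp_all
lemma wB_pos' : ∀ e, wB' e ≠ 0 ↔ e = s(0,2) ∨ e = s(1,3) := fun e => by
  unfold wB'; split <;> simp_all

/-- a 4-vertex graph with two binary weight functions where both MMS
values are 1 but every 2-partition gives some agent utility 0; hence no positive
multiplicative MMS approximation is achievable. -/
theorem stmt0 :
    ∃ (G : SimpleGraph (Fin 4)) (w : Fin 2 → Sym2 (Fin 4) → ℝ),
      (∀ i e, w i e = 0 ∨ w i e = 1) ∧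
      (∀ i, MMS G (w i) 2 = 1) ∧
      (∀ X : Fin 2 → Set (Fin 4), IsPartition 2 X → ∃ i, util G (w i) (X i) = 0) ∧
      (∀ α : ℝ, 0 < α →
        ¬ ∃ X : Fin 2 → Set (Fin 4), IsPartition 2 X ∧
            ∀ i, α * MMS G (w i) 2 ≤ util G (w i) (X i)) := by
  have h2 : ∀ i : Fin 2, MMS (⊤ : SimpleGraph (Fin 4)) (![wA', wB'] i) 2 = 1 := by
    intro i; fin_cases i
    · simpa using mms_eq_one' wA' wA01' 0 1 2 3 (by decide) (by decide) (by decide)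
        (by decide) (by decide) (by decide) (by decide) wA_pos'
        (by unfold wA'; simp) (by unfold wA'; simp)
    · simpa using mms_eq_one' wB' wB01' 0 2 1 3 (by decide) (by decide) (by decide)
        (by decide) (by decide) (by decide) (by decide) wB_pos'
        (by unfold wB'; simp) (by unfold wB'; simp)
  have h3 : ∀ X : Fin 2 → Set (Fin 4), IsPartition 2 X →
      ∃ i, util (⊤ : SimpleGraph (Fin 4)) (![wA', wB'] i) (X i) = 0 := by
    intro X hX
    have hEA : ∀ e, wA' e ≠ 0 → e ∈ ({s(0,1), s(2,3)} : Finset (Sym2 (Fin 4))) := by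
      intro e he; rcases (wA_pos' e).mp he with h|h <;> simp [h]
    have hEB : ∀ e, wB' e ≠ 0 → e ∈ ({s(0,2), s(1,3)} : Finset (Sym2 (Fin 4))) := by
      intro e he; rcases (wB_pos' e).mp he with h|h <;> simp [h]
    have hd := Set.disjoint_left.mp (hX.1 0 1 (by decide))
    by_cases h01 : (0:Fin 4) ∈ X 0 ∧ (1:Fin 4) ∈ X 0
    · refine ⟨1, ?_⟩
      show util ⊤ (![wA', wB'] 1) (X 1) = 0
      simp only [Matrix.cons_val_one, Matrix.head_cons]
      apply util_eq_zero' ⊤ wB01' _ hEB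
      intro e he hv
      rcases (wB_pos' e).mp he with rfl|rfl
      · exact hd h01.1 (hv 0 (Sym2.mem_mk_left _ _))
      · exact hd h01.2 (hv 1 (Sym2.mem_mk_left _ _))
    · by_cases h23 : (2:Fin 4) ∈ X 0 ∧ (3:Fin 4) ∈ X 0
      · refine ⟨1, ?_⟩
        show util ⊤ (![wA', wB'] 1) (X 1) = 0
        simp only [Matrix.cons_val_one, Matrix.head_cons]
        apply util_eq_zero' ⊤ wB01' _ hEB
        intro e he hv
        rcases (wB_pos' e).mp he with rfl|rfl
        · exact hd h23.1 (hv 2 (Sym2.mem_mk_right _ _))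
        · exact hd h23.2 (hv 3 (Sym2.mem_mk_right _ _))
      · refine ⟨0, ?_⟩
        show util ⊤ (![wA', wB'] 0) (X 0) = 0
        simp only [Matrix.cons_val_zero]
        apply util_eq_zero' ⊤ wA01' _ hEA
        intro e he hv
        rcases (wA_pos' e).mp he with rfl|rfl
        · exact h01 ⟨hv 0 (Sym2.mem_mk_left _ _), hv 1 (Sym2.mem_mk_right _ _)⟩
        · exact h23 ⟨hv 2 (Sym2.mem_mk_left _ _), hv 3 (Sym2.mem_mk_right _ _)⟩
  refine ⟨(⊤ : SimpleGraph (Fin 4)), ![wA', wB'], ?_, h2, h3, ?_⟩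
  · intro i e; fin_cases i
    · simpa using wA01' e
    · simpa using wB01' e
  · rintro α hα ⟨X, hX, hall⟩
    obtain ⟨i, hi⟩ := h3 X hX
    have hle := hall i
    rw [h2 i, hi, mul_one] at hle
    linarith
end

section
/- Let M* be a maximum matching of an unweighted graph G (all edges weight 1), and let (M1,...,Mn) be the greedy partition of the edges of M* into n bundles (greedily adding edges to the bundle of minimum current size). Then min_i |M_i| = ⌊|M*|/n⌋, and this equals the maximin share: in every n-partition (O1,...,On) of the vertices of G, some part O_j has maximum matching size at most ⌊|M*|/n⌋. -/
open Finset

variable {V : Type*} [Fintype V] [DecidableEq V]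

lemma matchWeight_one {V : Type*} [Fintype V] [DecidableEq V] (M : Finset (Sym2 V)) :
    matchWeight (fun _ => (1 : ℝ)) M = M.card := by
  simp [matchWeight]

lemma minIdx_spec {V : Type*} [Fintype V] [DecidableEq V] {n : ℕ} [NeZero n]
    (w : Sym2 V → ℝ) (P : Fin n → Finset (Sym2 V)) :
    ∀ j, matchWeight w (P (minIdx w P)) ≤ matchWeight w (P j) := by
  have h := Classical.choose_spec (Finset.exists_min_image Finset.univ
    (fun i => matchWeight w (P i)) ⟨0, Finset.mem_univ 0⟩)
  exact fun j => h.2 j (Finset.mem_univ j)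

lemma min_of_balanced {n : ℕ} (c : Fin (n+1) → ℕ) (hbal : ∀ i j, c i ≤ c j + 1) :
    (univ.inf' ⟨0, mem_univ 0⟩ c) = (∑ i, c i) / (n+1) := by
  obtain ⟨i₀, -, h0⟩ := Finset.exists_mem_eq_inf' ⟨0, mem_univ 0⟩ c
  set m := univ.inf' ⟨0, mem_univ 0⟩ c with hm
  clear_value m
  have hlo : m * (n+1) ≤ ∑ i, c i := by
    calc m * (n+1) = ∑ _i : Fin (n+1), m := by simp [mul_comm]
    _ ≤ ∑ i, c i := Finset.sum_le_sum fun i _ => hm ▸ Finset.inf'_le _ (mem_univ i)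
  have hsplit := Finset.add_sum_erase univ c (mem_univ i₀)
  have h2 : ∑ i ∈ univ.erase i₀, c i ≤ n * (m+1) := by
    calc ∑ i ∈ univ.erase i₀, c i ≤ ∑ _i ∈ univ.erase i₀, (m+1) :=
          Finset.sum_le_sum fun i _ => by have := hbal i i₀; omega
    _ = n * (m+1) := by
          simp [Finset.sum_const, Finset.card_erase_of_mem, mul_comm]
  have hhi : ∑ i, c i < (m+1) * (n+1) := by
    have : (m+1) * (n+1) = m + (n * (m+1)) + 1 := by ring
    omega
  exact (Nat.div_eq_of_lt_le hlo hhi).symm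

lemma greedy_invariant {V : Type*} [Fintype V] [DecidableEq V] {n : ℕ} [NeZero n]
    (L : List (Sym2 V)) :
    ∀ Q : Fin n → Finset (Sym2 V), L.Nodup →
    (∀ a ∈ L, ∀ i, a ∉ Q i) →
    (∀ i j, (Q i).card ≤ (Q j).card + 1) →
    (∀ i j, (greedyAux (fun _ => (1:ℝ)) L Q i).card ≤
       (greedyAux (fun _ => (1:ℝ)) L Q j).card + 1) ∧
    ∑ i, (greedyAux (fun _ => (1:ℝ)) L Q i).card = L.length + ∑ i, (Q i).card := by
  induction L with
  | nil => intro Q _ _ hbal; exact ⟨hbal, by simp [greedyAux]⟩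
  | cons e es ih =>
    intro Q hnd hfresh hbal
    set i₀ := minIdx (fun _ => (1:ℝ)) Q with hi₀
    set Q' := Function.update Q i₀ (insert e (Q i₀)) with hQ'
    have hmin : ∀ j, (Q i₀).card ≤ (Q j).card := by
      intro j
      have := minIdx_spec (fun _ => (1:ℝ)) Q j
      rw [matchWeight_one, matchWeight_one] at this
      exact_mod_cast this
    have hcard : ∀ i, (Q' i).card = if i = i₀ then (Q i₀).card + 1 else (Q i).card := by
      intro i
      rcases eq_or_ne i i₀ with h | hne
      · subst h
        rw [hQ', Function.update_self, if_pos rfl,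
          Finset.card_insert_of_notMem (hfresh e List.mem_cons_self _)]
      · rw [hQ', Function.update_of_ne hne, if_neg hne]
    have hfresh' : ∀ a ∈ es, ∀ i, a ∉ Q' i := by
      intro a ha i
      have hne : a ≠ e := by
        rintro rfl; exact (List.nodup_cons.mp hnd).1 ha
      have hQ : a ∉ Q i := hfresh a (List.mem_cons_of_mem e ha) i
      rcases eq_or_ne i i₀ with rfl | hni
      · simp only [hQ', Function.update_self, Finset.mem_insert]
        push_neg
        exact ⟨hne, hfresh a (List.mem_cons_of_mem e ha) i₀⟩
      · simpa [hQ', Function.update_of_ne hni] using hQ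
    have hbal' : ∀ i j, (Q' i).card ≤ (Q' j).card + 1 := by
      intro i j
      have hmi := hmin i; have hmj := hmin j
      have hb := hbal i j; have hbi := hbal i i₀
      rw [hcard i, hcard j]; split_ifs <;> omega
    have hsum' : ∑ i, (Q' i).card = 1 + ∑ i, (Q i).card := by
      have hfun : (fun i => (Q' i).card) =
          Function.update (fun i => (Q i).card) i₀ ((Q i₀).card + 1) := by
        funext i
        rw [hcard i]
        by_cases h : i = i₀
        · subst h; simp
        · rw [Function.update_of_ne h, if_neg h]
      calc ∑ i, (Q' i).card
          = ∑ i, Function.update (fun i => (Q i).card) i₀ ((Q i₀).card + 1) i := by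
            rw [hfun]
        _ = (Q i₀).card + 1 + ∑ i ∈ univ.erase i₀, (Q i).card := by
            rw [Finset.sum_update_of_mem (Finset.mem_univ i₀), ← Finset.erase_eq]
        _ = 1 + ∑ i, (Q i).card := by
            have h := Finset.add_sum_erase univ (fun i => (Q i).card) (Finset.mem_univ i₀)
            omega
    obtain ⟨hb, hs⟩ := ih Q' (List.nodup_cons.mp hnd).2 hfresh' hbal'
    refine ⟨by simpa [greedyAux] using hb, ?_⟩
    have : greedyAux (fun _ => (1:ℝ)) (e :: es) Q = greedyAux (fun _ => (1:ℝ)) es Q' := rfl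
    rw [this, hs, hsum']
    simp [List.length_cons]; ring

/-- greedy partition of a maximum matching of an unweighted graph
achieves min bundle size ⌊|M*|/n⌋, which equals the maximin share. -/
theorem stmt1 {V : Type*} [Fintype V] [DecidableEq V] (G : SimpleGraph V) (n : ℕ)
    (M : Finset (Sym2 V)) (hM : IsMatchingOn G Set.univ M)
    (hmax : ∀ M' : Finset (Sym2 V), IsMatchingOn G Set.univ M' → M'.card ≤ M.card)
    (P : Fin (n + 1) → Finset (Sym2 V))
    (hP : IsGreedyPartition (fun _ => (1 : ℝ)) M P) :
    (Finset.univ.inf' ⟨0, Finset.mem_univ 0⟩ fun i => (P i).card) = M.card / (n + 1) ∧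
    ∀ X : Fin (n + 1) → Set V, IsPartition (n + 1) X →
      ∃ j, ∀ M' : Finset (Sym2 V), IsMatchingOn G (X j) M' →
        M'.card ≤ M.card / (n + 1) := by
  classical
  obtain ⟨L, σ, hnd, hLM, -, hPeq, -⟩ := hP
  set R := greedyAux (fun _ => (1:ℝ)) L (fun _ : Fin (n+1) => (∅ : Finset (Sym2 V))) with hR
  obtain ⟨hbal, hsum⟩ := greedy_invariant L (fun _ : Fin (n+1) => (∅ : Finset (Sym2 V))) hnd (by simp) (by simp)
  have hlen : L.length = M.card := by rw [← hLM, List.toFinset_card_of_nodup hnd]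
  have hsumR : ∑ i, (R i).card = M.card := by
    simp only [Finset.card_empty, Finset.sum_const_zero, add_zero] at hsum
    rw [← hR] at hsum
    rw [hsum, hlen]
  constructor
  · have hmin : (univ.inf' ⟨0, mem_univ 0⟩ fun i => (P i).card)
        = univ.inf' ⟨0, mem_univ 0⟩ fun i => (R i).card := by
      apply le_antisymm
      · apply Finset.le_inf'
        intro j _
        have hPj : (P (σ.symm j)).card = (R j).card := by
          rw [hPeq]; simp [hR]
        exact hPj ▸ Finset.inf'_le _ (mem_univ (σ.symm j))
      · apply Finset.le_inf'
        intro j _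
        have hPj : (R (σ j)).card = (P j).card := by
          rw [hPeq]; simp [hR]
        exact hPj ▸ Finset.inf'_le _ (mem_univ (σ j))
    rw [hmin, min_of_balanced (fun i => (R i).card) (hR ▸ hbal), hsumR]
  · intro X hX
    by_contra hcon
    push_neg at hcon
    choose F hF1 hF2 using hcon
    set q := M.card / (n+1) with hq
    have hvert : ∀ j, ∀ e ∈ F j, ∀ v ∈ e, v ∈ X j := fun j => (hF1 j).2.1
    have hdisj : ∀ j ∈ (univ : Finset (Fin (n+1))), ∀ k ∈ (univ : Finset (Fin (n+1))),
        j ≠ k → Disjoint (F j) (F k) := by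
      intro j _ k _ hjk
      rw [Finset.disjoint_left]
      intro e hej hek
      exact Set.disjoint_left.mp (hX.1 j k hjk)
        (hvert j e hej _ (Sym2.out_fst_mem e)) (hvert k e hek _ (Sym2.out_fst_mem e))
    set M'' := Finset.univ.biUnion F with hM''
    have hmatch : IsMatchingOn G Set.univ M'' := by
      refine ⟨?_, fun _ _ v _ => Set.mem_univ v, ?_⟩
      · intro e he
        obtain ⟨j, -, hej⟩ := Finset.mem_biUnion.mp he
        exact (hF1 j).1 e hej
      · intro e he f hf hef v hve hvf
        obtain ⟨j, -, hej⟩ := Finset.mem_biUnion.mp he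
        obtain ⟨k, -, hfk⟩ := Finset.mem_biUnion.mp hf
        rcases eq_or_ne j k with rfl | hjk
        · exact (hF1 j).2.2 e hej f hfk hef v hve hvf
        · exact Set.disjoint_left.mp (hX.1 j k hjk)
            (hvert j e hej v hve) (hvert k f hfk v hvf)
    have hcard : (q+1) * (n+1) ≤ M''.card := by
      rw [hM'', Finset.card_biUnion hdisj]
      calc (q+1) * (n+1) = ∑ _j : Fin (n+1), (q+1) := by simp [mul_comm]
      _ ≤ ∑ j, (F j).card := Finset.sum_le_sum fun j _ => hF2 j
    have : q + 1 ≤ M.card / (n+1) :=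
      (Nat.le_div_iff_mul_le (Nat.succ_pos n)).mpr (le_trans hcard (hmax M'' hmatch))
    omega
end

section
/- Let M be a maximum weight matching of an edge-weighted graph G and let (M1,...,Mn) be a greedy partition of M with w(M1) ≥ ... ≥ w(Mn). If |M1| ≥ 2, then w(Mn) ≥ (1/2)·w(M1). -/
open Finset

variable {V : Type*} [Fintype V] [DecidableEq V]

lemma minIdx_le {n : ℕ} [NeZero n] (w : Sym2 V → ℝ) (P : Fin n → Finset (Sym2 V)) (j : Fin n) :
    matchWeight w (P (minIdx w P)) ≤ matchWeight w (P j) := by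
  have h := Classical.choose_spec (Finset.exists_min_image Finset.univ
    (fun i => matchWeight w (P i)) ⟨0, Finset.mem_univ 0⟩)
  exact h.2 j (Finset.mem_univ j)

lemma greedy_key {n : ℕ} [NeZero n] (w : Sym2 V → ℝ) (hw : ∀ e, 0 ≤ w e) :
    ∀ (L : List (Sym2 V)) (P : Fin n → Finset (Sym2 V)),
    L.Nodup → L.Pairwise (fun a b => w b ≤ w a) →
    (∀ e ∈ L, ∀ i, e ∉ P i) →
    (∀ i, ∀ f ∈ P i, ∀ e ∈ L, w e ≤ w f) →
    (∀ i, 2 ≤ (P i).card →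
      matchWeight w (P i) ≤ 2 * matchWeight w (P (minIdx w P))) →
    ∀ i, 2 ≤ ((greedyAux w L P) i).card →
      matchWeight w ((greedyAux w L P) i)
        ≤ 2 * matchWeight w ((greedyAux w L P) (minIdx w (greedyAux w L P))) := by
  intro L
  induction L with
  | nil => intro P _ _ _ _ h3; exact h3
  | cons e es ih =>
    intro P hnd hs h1 h2 h3
    simp only [greedyAux]
    set k := minIdx w P with hk
    set P' := Function.update P k (insert e (P k)) with hP'
    have hek : e ∉ P k := h1 e List.mem_cons_self k
    have hsum : matchWeight w (P' k) = w e + matchWeight w (P k) := by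
      simp [hP', matchWeight, Finset.sum_insert hek]
    have hne : ∀ i, i ≠ k → P' i = P i := by
      intro i hi; simp [hP', Function.update_of_ne hi]
    -- every bundle weight is nonneg
    have hwsum : ∀ (S : Finset (Sym2 V)), 0 ≤ matchWeight w S := by
      intro S; exact Finset.sum_nonneg fun f _ => hw f
    -- old min ≤ new bundle weights
    have hmin_old : ∀ j, matchWeight w (P k) ≤ matchWeight w (P j) := minIdx_le w P
    have hmono : ∀ j, matchWeight w (P k) ≤ matchWeight w (P' j) := by
      intro j
      by_cases hj : j = k
      · subst hj; rw [hsum]; linarith [hw e]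
      · rw [hne j hj]; exact hmin_old j
    have hmin' : matchWeight w (P k) ≤ matchWeight w (P' (minIdx w P')) :=
      hmono _
    apply ih P' (List.nodup_cons.mp hnd).2 (List.pairwise_cons.mp hs).2
    · -- nodup invariant
      intro f hf i
      have hfe : f ≠ e := by
        rintro rfl; exact (List.nodup_cons.mp hnd).1 hf
      by_cases hi : i = k
      · subst hi
        simp only [hP', Function.update_self, Finset.mem_insert]
        push_neg
        exact ⟨hfe, h1 f (List.mem_cons_of_mem e hf) k⟩
      · rw [hne i hi]; exact h1 f (List.mem_cons_of_mem e hf) i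
    · -- order invariant
      intro i f hf e' he'
      by_cases hi : i = k
      · subst hi
        simp only [hP', Function.update_self, Finset.mem_insert] at hf
        rcases hf with rfl | hf
        · exact (List.pairwise_cons.mp hs).1 e' he'
        · exact h2 k f hf e' (List.mem_cons_of_mem e he')
      · rw [hne i hi] at hf
        exact h2 i f hf e' (List.mem_cons_of_mem e he')
    · -- weight invariant
      intro i hcard
      by_cases hi : i = k
      · subst hi
        -- P k is nonempty since inserting one edge gave card ≥ 2
        have h1c : 1 ≤ (P k).card := by
          have := Finset.card_insert_le e (P k)
          have hcard' : 2 ≤ (insert e (P k)).card := by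
            simpa only [hP', Function.update_self] using hcard
          omega
        obtain ⟨f, hf⟩ := Finset.card_pos.mp (show 0 < (P k).card by omega)
        have hwe : w e ≤ w f := h2 k f hf e List.mem_cons_self
        have hfle : w f ≤ matchWeight w (P k) :=
          Finset.single_le_sum (fun g _ => hw g) hf
        rw [hsum]
        linarith
      · rw [hne i hi]
        rw [hne i hi] at hcard
        have := h3 i hcard
        linarith

/-- in a greedy partition of a maximum weight matching with
w(M₁) ≥ ... ≥ wₙ(Mₙ), if |M₁| ≥ 2 then w(Mₙ) ≥ (1/2)·w(M₁). -/
theorem stmt2 {V : Type*} [Fintype V] [DecidableEq V] (G : SimpleGraph V)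
    (w : Sym2 V → ℝ) (hw : ∀ e, 0 ≤ w e) (n : ℕ)
    (M : Finset (Sym2 V)) (hM : IsMaxMatching G w M)
    (P : Fin (n + 1) → Finset (Sym2 V)) (hP : IsGreedyPartition w M P)
    (h2 : 2 ≤ (P 0).card) :
    (1 / 2) * matchWeight w (P 0) ≤ matchWeight w (P (Fin.last n)) := by
  obtain ⟨L, σ, hnd, hL, hs, hPQ, hsorted⟩ := hP
  set Q := greedyAux (n := n + 1) w L (fun _ => (∅ : Finset (Sym2 V))) with hQ
  have hkey := greedy_key (V := V) (n := n + 1) w hw L (fun _ => ∅) hnd hs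
    (by intro e _ i; simp) (by intro i f hf; simp at hf) (by intro i h; simp at h)
  have hP0 : P 0 = Q (σ 0) := by rw [hPQ]; rfl
  have hPl : P (Fin.last n) = Q (σ (Fin.last n)) := by rw [hPQ]; rfl
  have h2' : 2 ≤ (Q (σ 0)).card := by rwa [hP0] at h2
  have hle : matchWeight w (Q (σ 0)) ≤ 2 * matchWeight w (Q (minIdx w Q)) :=
    hkey (σ 0) h2'
  have hminle : matchWeight w (Q (minIdx w Q)) ≤ matchWeight w (Q (σ (Fin.last n))) :=
    minIdx_le w Q _
  rw [hP0, hPl]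
  linarith
end

section
/- Let M be a maximum weight matching of G, (M1,...,Mn) its greedy partition with w(M1) ≥ ... ≥ w(Mn), and suppose |M1| ≥ 2. Then w(Mn) ≥ (1/2)·MMS, where MMS is the maximin share for the identical utility function given by maximum matching weight. In particular the allocation assigning the vertices of M_i to agent i is 1/2-MMS fair. -/
open Finset

variable {V : Type*} [Fintype V] [DecidableEq V]

section Helpers

lemma matchWeight_nonneg' (w : Sym2 V → ℝ) (hw : ∀ e, 0 ≤ w e) (M : Finset (Sym2 V)) :
    0 ≤ matchWeight w M :=
  Finset.sum_nonneg fun e _ => hw e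

lemma utilSet_finite (G : SimpleGraph V) (w : Sym2 V → ℝ) (S : Set V) :
    {x | ∃ M : Finset (Sym2 V), IsMatchingOn G S M ∧ x = matchWeight w M}.Finite :=
  (Set.finite_range (matchWeight w)).subset (by rintro x ⟨M, _, rfl⟩; exact ⟨M, rfl⟩)

lemma isMatchingOn_empty (G : SimpleGraph V) (S : Set V) :
    IsMatchingOn G S (∅ : Finset (Sym2 V)) := by
  refine ⟨?_, ?_, ?_⟩ <;> simp

lemma utilSet_nonempty (G : SimpleGraph V) (w : Sym2 V → ℝ) (S : Set V) :
    {x | ∃ M : Finset (Sym2 V), IsMatchingOn G S M ∧ x = matchWeight w M}.Nonempty :=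
  ⟨0, ∅, isMatchingOn_empty G S, by simp [matchWeight]⟩

lemma le_util (G : SimpleGraph V) (w : Sym2 V → ℝ) (S : Set V) {N : Finset (Sym2 V)}
    (h : IsMatchingOn G S N) : matchWeight w N ≤ util G w S :=
  le_csSup (utilSet_finite G w S).bddAbove ⟨N, h, rfl⟩

lemma util_exists (G : SimpleGraph V) (w : Sym2 V → ℝ) (S : Set V) :
    ∃ N : Finset (Sym2 V), IsMatchingOn G S N ∧ util G w S = matchWeight w N :=
  (utilSet_nonempty G w S).csSup_mem (utilSet_finite G w S)

lemma sum_util_le (G : SimpleGraph V) (w : Sym2 V → ℝ) {M : Finset (Sym2 V)}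
    (hM : IsMaxMatching G w M) {n : ℕ} (X : Fin n → Set V)
    (hX : ∀ i j, i ≠ j → Disjoint (X i) (X j)) :
    ∑ i, util G w (X i) ≤ matchWeight w M := by
  choose N hN hNw using fun i => util_exists G w (X i)
  have hvert : ∀ i, ∀ e ∈ N i, ∀ v ∈ e, v ∈ X i := fun i => (hN i).2.1
  have hdisj : Set.PairwiseDisjoint ((Finset.univ : Finset (Fin n)) : Set (Fin n)) N := by
    intro i _ j _ hij
    simp only [Function.onFun]
    rw [Finset.disjoint_left]
    intro e hei hej
    induction e using Sym2.ind with
    | _ a b =>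
      exact (hX i j hij).le_bot
        ⟨hvert i _ hei a (Sym2.mem_mk_left a b), hvert j _ hej a (Sym2.mem_mk_left a b)⟩
  have hmatch : IsMatchingOn G Set.univ (Finset.univ.biUnion N) := by
    refine ⟨?_, fun _ _ _ _ => Set.mem_univ _, ?_⟩
    · intro e he
      obtain ⟨i, _, hei⟩ := Finset.mem_biUnion.mp he
      exact (hN i).1 e hei
    · intro e he f hf hef v hve hvf
      obtain ⟨i, _, hei⟩ := Finset.mem_biUnion.mp he
      obtain ⟨j, _, hfj⟩ := Finset.mem_biUnion.mp hf
      rcases eq_or_ne i j with rfl | hij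
      · exact (hN i).2.2 e hei f hfj hef v hve hvf
      · exact (hX i j hij).le_bot ⟨hvert i _ hei v hve, hvert j _ hfj v hvf⟩
  calc ∑ i, util G w (X i) = ∑ i, matchWeight w (N i) := by simp_rw [hNw]
    _ = matchWeight w (Finset.univ.biUnion N) := (Finset.sum_biUnion hdisj).symm
    _ ≤ matchWeight w M := hM.2 _ hmatch

lemma greedy_subset {n : ℕ} [NeZero n] (w : Sym2 V → ℝ) :
    ∀ (L : List (Sym2 V)) (P : Fin n → Finset (Sym2 V)) (A : Finset (Sym2 V)),
    (∀ i, P i ⊆ A) → L.toFinset ⊆ A → ∀ i, greedyAux w L P i ⊆ A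
  | [], P, A, hP, _, i => hP i
  | e :: es, P, A, hP, hL, i => by
    rw [greedyAux]
    refine greedy_subset w es _ A ?_ (fun x hx => hL (by simp at hx ⊢; exact Or.inr hx)) i
    intro j
    rcases eq_or_ne j (minIdx w P) with rfl | hj
    · rw [Function.update_self]
      exact Finset.insert_subset (hL (by simp)) (hP _)
    · rw [Function.update_of_ne hj]; exact hP j

lemma greedy_sum {n : ℕ} [NeZero n] (w : Sym2 V → ℝ) :
    ∀ (L : List (Sym2 V)) (P : Fin n → Finset (Sym2 V)), L.Nodup →
    (∀ e ∈ L, ∀ i, e ∉ P i) →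
    ∑ i, matchWeight w (greedyAux w L P i) = ∑ i, matchWeight w (P i) + (L.map w).sum
  | [], P, _, _ => by simp [greedyAux]
  | e :: es, P, hnd, hmem => by
    rw [greedyAux]
    set m := minIdx w P with hm
    have hrec := greedy_sum w es (Function.update P m (insert e (P m)))
      hnd.of_cons ?_
    · rw [hrec]
      have hem : e ∉ P m := hmem e (by simp) m
      have h1 : ∑ i, matchWeight w (Function.update P m (insert e (P m)) i)
          = ∑ i, matchWeight w (P i) + w e := by
        rw [← Finset.sum_erase_add _ _ (Finset.mem_univ m)]
        have hrest : ∀ i ∈ Finset.univ.erase m,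
            matchWeight w (Function.update P m (insert e (P m)) i) = matchWeight w (P i) :=
          fun i hi => by rw [Function.update_of_ne (Finset.ne_of_mem_erase hi)]
        rw [Finset.sum_congr rfl hrest, Function.update_self, matchWeight,
          Finset.sum_insert hem]
        have hsplit := Finset.sum_erase_add Finset.univ
          (fun i => matchWeight w (P i)) (Finset.mem_univ m)
        simp only [matchWeight] at hsplit ⊢
        linarith
      rw [h1, List.map_cons, List.sum_cons]
      ring
    · intro f hf i
      have hfe : f ≠ e := by rintro rfl; exact hnd.notMem hf
      rcases eq_or_ne i m with rfl | hi
      · rw [Function.update_self, Finset.mem_insert]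
        push_neg
        exact ⟨hfe, hmem f (by simp [hf]) m⟩
      · rw [Function.update_of_ne hi]
        exact hmem f (by simp [hf]) i

lemma greedy_H {n : ℕ} [NeZero n] (w : Sym2 V → ℝ) (hw : ∀ e, 0 ≤ w e) :
    ∀ (L : List (Sym2 V)) (P : Fin n → Finset (Sym2 V)),
    L.Pairwise (fun a b => w b ≤ w a) →
    (∀ i, ∀ f ∈ P i, ∀ e ∈ L, w e ≤ w f) →
    (∀ k j, 2 ≤ (P k).card → matchWeight w (P k) ≤ 2 * matchWeight w (P j)) →
    ∀ k j, 2 ≤ (greedyAux w L P k).card →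
      matchWeight w (greedyAux w L P k) ≤ 2 * matchWeight w (greedyAux w L P j)
  | [], P, _, _, hH => by simpa [greedyAux] using hH
  | e :: es, P, hsort, hheavy, hH => by
    rw [greedyAux]
    set m := minIdx w P with hm
    set P' := Function.update P m (insert e (P m)) with hP'
    have hsort' := hsort.of_cons
    have hhead : ∀ f ∈ es, w f ≤ w e := fun f hf => (List.pairwise_cons.mp hsort).1 f hf
    -- weights only grow
    have hgrow : ∀ j, matchWeight w (P j) ≤ matchWeight w (P' j) := by
      intro j
      rcases eq_or_ne j m with rfl | hj
      · rw [hP', Function.update_self]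
        exact Finset.sum_le_sum_of_subset_of_nonneg (Finset.subset_insert _ _)
          (fun x _ _ => hw x)
      · rw [hP', Function.update_of_ne hj]
    have hub : matchWeight w (P' m) ≤ w e + matchWeight w (P m) := by
      rw [hP', Function.update_self]
      by_cases he : e ∈ P m
      · rw [Finset.insert_eq_self.mpr he]
        linarith [hw e]
      · rw [matchWeight, Finset.sum_insert he]; rfl
    have hheavy' : ∀ i, ∀ f ∈ P' i, ∀ e' ∈ es, w e' ≤ w f := by
      intro i f hf e' he'
      have hfi : f ∈ insert e (P i) := by
        rcases eq_or_ne i m with rfl | hi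
        · rwa [hP', Function.update_self] at hf
        · rw [hP', Function.update_of_ne hi] at hf
          exact Finset.mem_insert_of_mem hf
      rcases Finset.mem_insert.mp hfi with rfl | hfi
      · exact hhead e' he'
      · exact hheavy i f hfi e' (by simp [he'])
    have hH' : ∀ k j, 2 ≤ (P' k).card → matchWeight w (P' k) ≤ 2 * matchWeight w (P' j) := by
      intro k j hk
      rcases eq_or_ne k m with rfl | hkm
      · -- bundle m received e; it was the lightest
        rw [hP', Function.update_self] at hk
        have h1 : 1 ≤ (P m).card := by
          have := Finset.card_insert_le e (P m)
          omega
        obtain ⟨f, hf⟩ := Finset.card_pos.mp (show 0 < (P m).card by omega)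
        have hef : w e ≤ w f := hheavy m f hf e (by simp)
        have hfW : w f ≤ matchWeight w (P m) :=
          Finset.single_le_sum (fun x _ => hw x) hf
        have hmin := minIdx_le w P j
        rw [← hm] at hmin
        have := hgrow j
        have := hub
        linarith
      · rw [hP', Function.update_of_ne hkm] at hk ⊢
        calc matchWeight w (P k) ≤ 2 * matchWeight w (P j) := hH k j hk
          _ ≤ 2 * matchWeight w (P' j) := by linarith [hgrow j]
    exact greedy_H w hw es P' hsort' hheavy' hH'

end Helpers

/-- if |M₁| ≥ 2 in the greedy partition of a maximum weight matching,
then w(Mₙ) ≥ (1/2)·MMS and the allocation of vertex sets V(Mᵢ) is 1/2-MMS fair. -/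
theorem stmt3 {V : Type*} [Fintype V] [DecidableEq V] (G : SimpleGraph V)
    (w : Sym2 V → ℝ) (hw : ∀ e, 0 ≤ w e) (n : ℕ)
    (M : Finset (Sym2 V)) (hM : IsMaxMatching G w M)
    (P : Fin (n + 1) → Finset (Sym2 V)) (hP : IsGreedyPartition w M P)
    (h2 : 2 ≤ (P 0).card) :
    (1 / 2) * MMS G w (n + 1) ≤ matchWeight w (P (Fin.last n)) ∧
    ∀ i : Fin (n + 1), (1 / 2) * MMS G w (n + 1) ≤ util G w (verts (P i)) := by
  obtain ⟨L, σ, hnd, htf, hsort, hPdef, hmono⟩ := hP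
  -- each bundle is a subset of M
  have hsub : ∀ i, P i ⊆ M := by
    intro i
    rw [hPdef]
    exact greedy_subset w L _ M (fun _ => Finset.empty_subset M) (htf ▸ le_refl M) (σ i)
  -- sum of bundle weights = weight of M
  have hsum : ∑ i, matchWeight w (P i) = matchWeight w M := by
    have h1 : ∑ i, matchWeight w (P i)
        = ∑ i, matchWeight w (greedyAux w L (fun _ : Fin (n + 1) => (∅ : Finset (Sym2 V))) i) := by
      rw [hPdef]
      exact Equiv.sum_comp σ
        (fun i => matchWeight w (greedyAux w L (fun _ : Fin (n + 1) => (∅ : Finset (Sym2 V))) i))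
    have h2 := greedy_sum w L (fun _ : Fin (n + 1) => (∅ : Finset (Sym2 V))) hnd (by simp)
    rw [h1, h2]
    simp only [matchWeight, Finset.sum_empty, Finset.sum_const_zero, zero_add]
    rw [← htf, Finset.sum_list_map_count]
    refine Finset.sum_congr rfl fun e he => ?_
    rw [List.count_eq_one_of_mem hnd (List.mem_toFinset.mp he)]
    simp
  -- the key greedy bound : w(P 0) ≤ 2 w(P j) for every j
  have hkey : ∀ j, matchWeight w (P 0) ≤ 2 * matchWeight w (P j) := by
    intro j
    have hcard : 2 ≤ ((greedyAux w L (fun _ : Fin (n + 1) => (∅ : Finset (Sym2 V)))) (σ 0)).card := by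
      rw [hPdef] at h2; exact h2
    have := greedy_H w hw L (fun _ : Fin (n + 1) => (∅ : Finset (Sym2 V))) hsort
      (by simp) (by simp) (σ 0) (σ j) hcard
    rw [hPdef]
    exact this
  -- MMS ≤ w(M) / (n+1)
  have hwM : 0 ≤ matchWeight w M := matchWeight_nonneg' w hw M
  have hMMS : MMS G w (n + 1) ≤ matchWeight w M / (n + 1) := by
    apply Real.sSup_le
    · rintro x ⟨X, hX, rfl⟩
      have hbdd : BddBelow (Set.range fun i => util G w (X i)) :=
        (Set.finite_range _).bddBelow
      have hinf : ∀ i, (⨅ i, util G w (X i)) ≤ util G w (X i) := fun i => ciInf_le hbdd i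
      have hsumX : ∑ i, util G w (X i) ≤ matchWeight w M := sum_util_le G w hM X hX.1
      have hcount : ((n : ℝ) + 1) * (⨅ i, util G w (X i)) ≤ ∑ i, util G w (X i) := by
        calc ((n : ℝ) + 1) * (⨅ i, util G w (X i))
            = ∑ _i : Fin (n + 1), (⨅ i, util G w (X i)) := by
              rw [Finset.sum_const, Finset.card_univ, Fintype.card_fin, nsmul_eq_mul]
              push_cast; ring
          _ ≤ ∑ i, util G w (X i) := Finset.sum_le_sum fun i _ => hinf i
      rw [le_div_iff₀ (by positivity)]
      push_cast
      linarith
    · positivity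
  -- w(M)/(n+1) ≤ w(P 0)
  have hP0 : matchWeight w M / (n + 1) ≤ matchWeight w (P 0) := by
    rw [div_le_iff₀ (by positivity)]
    have : ∑ i, matchWeight w (P i) ≤ ∑ _i : Fin (n + 1), matchWeight w (P 0) :=
      Finset.sum_le_sum fun i _ => hmono 0 i (Fin.zero_le i)
    rw [Finset.sum_const, Finset.card_univ, Fintype.card_fin, nsmul_eq_mul] at this
    push_cast at this ⊢
    linarith [hsum ▸ this]
  have hlast : (1 / 2) * MMS G w (n + 1) ≤ matchWeight w (P (Fin.last n)) := by
    have := hkey (Fin.last n)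
    linarith
  refine ⟨hlast, fun i => ?_⟩
  -- P i is a matching on its own vertex set
  have hmatch : IsMatchingOn G (verts (P i)) (P i) := by
    refine ⟨fun e he => hM.1.1 e (hsub i he), fun e he v hv => ⟨e, he, hv⟩, ?_⟩
    intro e he f hf hef v hv
    exact hM.1.2.2 e (hsub i he) f (hsub i hf) hef v hv
  calc (1 / 2) * MMS G w (n + 1) ≤ matchWeight w (P (Fin.last n)) := hlast
    _ ≤ matchWeight w (P i) := hmono i (Fin.last n) (Fin.le_last i)
    _ ≤ util G w (verts (P i)) := le_util G w _ hmatch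
end

section
/- Let G be a graph with edge weights w, M a maximum weight matching of G, and (M1,...,Mn) a greedy partition of M with w(M1) ≥ ... ≥ w(Mn). If |M1| = 1, say M1 = {e1}, then w(e1) ≥ MMS, i.e., the heaviest edge weight is at least the maximin share value for identical matching-based utilities. -/
open Finset

variable {V : Type*} [Fintype V] [DecidableEq V]

set_option linter.unusedSectionVars false in
lemma sum_greedyAux {n : ℕ} [NeZero n] (w : Sym2 V → ℝ) :
    ∀ (L : List (Sym2 V)) (P : Fin n → Finset (Sym2 V)), L.Nodup →
    (∀ e ∈ L, ∀ i, e ∉ P i) →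
    ∑ i, matchWeight w (greedyAux w L P i) = (L.map w).sum + ∑ i, matchWeight w (P i)
  | [], P, _, _ => by simp [greedyAux]
  | e :: es, P, hnd, hnotin => by
    rw [greedyAux]
    set k := minIdx w P with hk
    have hupd : ∀ e' ∈ es, ∀ i, e' ∉ Function.update P k (insert e (P k)) i := by
      intro e' he' i
      rcases eq_or_ne i k with h | h
      · rw [h, Function.update_self]
        intro hmem
        rcases Finset.mem_insert.mp hmem with h2 | h2
        · exact (List.nodup_cons.mp hnd).1 (h2 ▸ he')
        · exact hnotin e' (List.mem_cons_of_mem _ he') k h2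
      · rw [Function.update_of_ne h]
        exact hnotin e' (List.mem_cons_of_mem _ he') i
    rw [sum_greedyAux w es _ (List.nodup_cons.mp hnd).2 hupd]
    have hsum : ∑ i, matchWeight w (Function.update P k (insert e (P k)) i)
        = w e + ∑ i, matchWeight w (P i) := by
      have h1 : matchWeight w (insert e (P k)) = w e + matchWeight w (P k) := by
        rw [matchWeight, Finset.sum_insert (hnotin e List.mem_cons_self k)]; rfl
      have hL : ∑ i, matchWeight w (Function.update P k (insert e (P k)) i)
          = matchWeight w (insert e (P k)) + ∑ i ∈ Finset.univ.erase k, matchWeight w (P i) := by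
        rw [← Finset.add_sum_erase _ _ (Finset.mem_univ k), Function.update_self]
        congr 1
        exact Finset.sum_congr rfl fun i hi =>
          congrArg _ (Function.update_of_ne (Finset.mem_erase.mp hi).1 _ _)
      have hR : ∑ i, matchWeight w (P i)
          = matchWeight w (P k) + ∑ i ∈ Finset.univ.erase k, matchWeight w (P i) :=
        (Finset.add_sum_erase _ _ (Finset.mem_univ k)).symm
      rw [hL, hR, h1]; ring
    rw [hsum]
    simp; ring

lemma util_attained (G : SimpleGraph V) (w : Sym2 V → ℝ) (S : Set V) :
    ∃ M0 : Finset (Sym2 V), IsMatchingOn G S M0 ∧ util G w S = matchWeight w M0 ∧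
      ∀ M', IsMatchingOn G S M' → matchWeight w M' ≤ util G w S := by
  set s := {x | ∃ M : Finset (Sym2 V), IsMatchingOn G S M ∧ x = matchWeight w M} with hsdef
  have hs : s = (fun M => matchWeight w M) '' {M | IsMatchingOn G S M} := by
    ext x; simp [hsdef, eq_comm]
  have hfin : s.Finite := by rw [hs]; exact Set.Finite.image _ (Set.toFinite _)
  have hne : s.Nonempty :=
    ⟨matchWeight w ∅, ∅, ⟨by simp, by simp, by simp⟩, rfl⟩
  obtain ⟨a, has, hmax⟩ := Set.exists_max_image s id hfin hne
  obtain ⟨M0, hM0, rfl⟩ := has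
  have hsup : util G w S = matchWeight w M0 := by
    rw [util, ← hsdef]
    exact IsGreatest.csSup_eq ⟨⟨M0, hM0, rfl⟩, fun b hb => hmax b hb⟩
  exact ⟨M0, hM0, hsup, fun M' hM' => hsup ▸ hmax _ ⟨M', hM', rfl⟩⟩

/-- if the heaviest bundle of the greedy partition of a maximum
weight matching is a single edge e₁, then w(e₁) ≥ MMS. -/
theorem stmt5 {V : Type*} [Fintype V] [DecidableEq V] (G : SimpleGraph V)
    (w : Sym2 V → ℝ) (hw : ∀ e, 0 ≤ w e) (n : ℕ)
    (M : Finset (Sym2 V)) (hM : IsMaxMatching G w M)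
    (P : Fin (n + 1) → Finset (Sym2 V)) (hP : IsGreedyPartition w M P)
    (e1 : Sym2 V) (h1 : P 0 = {e1}) :
    MMS G w (n + 1) ≤ w e1 := by
  obtain ⟨L, σ, hnd, hLM, _, hPdef, hmono⟩ := hP
  have hwM : ∑ i, matchWeight w (P i) = matchWeight w M := by
    have hcomp := Equiv.sum_comp σ
      (fun i => matchWeight w (greedyAux w L (fun _ => (∅ : Finset (Sym2 V))) i))
    calc ∑ i, matchWeight w (P i)
        = ∑ i, matchWeight w (greedyAux w L (fun _ => (∅ : Finset (Sym2 V))) (σ i)) := by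
          rw [hPdef]; rfl
      _ = ∑ i, matchWeight w (greedyAux w L (fun _ => (∅ : Finset (Sym2 V))) i) := hcomp
      _ = (L.map w).sum + ∑ _i : Fin (n+1), matchWeight w (∅ : Finset (Sym2 V)) :=
          sum_greedyAux w L _ hnd (by simp)
      _ = matchWeight w M := by
          simp [matchWeight, ← hLM, List.sum_toFinset _ hnd]
  have hP0 : matchWeight w (P 0) = w e1 := by rw [h1, matchWeight, Finset.sum_singleton]
  have hbound : matchWeight w M ≤ (n + 1 : ℝ) * w e1 := by
    rw [← hwM]
    calc ∑ i, matchWeight w (P i) ≤ ∑ _i : Fin (n+1), w e1 :=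
          Finset.sum_le_sum fun i _ => hP0 ▸ hmono 0 i (Fin.zero_le i)
      _ = (n + 1 : ℝ) * w e1 := by
          simp [Finset.sum_const, Finset.card_univ, nsmul_eq_mul]
  apply Real.sSup_le _ (hw e1)
  rintro x ⟨X, hX, rfl⟩
  choose Mi hMi hMieq hMimax using fun i => util_attained G w (X i)
  set M' := Finset.univ.biUnion Mi with hM'def
  have hvert : ∀ i, ∀ e ∈ Mi i, ∀ v ∈ e, v ∈ X i := fun i => (hMi i).2.1
  have hmatch : IsMatchingOn G Set.univ M' := by
    refine ⟨?_, fun e _ v _ => Set.mem_univ v, ?_⟩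
    · intro e he
      obtain ⟨i, _, hei⟩ := Finset.mem_biUnion.mp he
      exact (hMi i).1 e hei
    · intro e he f hf hef v hve hvf
      obtain ⟨i, _, hei⟩ := Finset.mem_biUnion.mp he
      obtain ⟨j, _, hfj⟩ := Finset.mem_biUnion.mp hf
      rcases eq_or_ne i j with rfl | hij
      · exact (hMi i).2.2 e hei f hfj hef v hve hvf
      · exact Set.disjoint_left.mp (hX.1 i j hij) (hvert i e hei v hve) (hvert j f hfj v hvf)
  have hdisj : ∀ i ∈ Finset.univ, ∀ j ∈ Finset.univ, i ≠ j →
      Disjoint (Mi i) (Mi j) := by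
    intro i _ j _ hij
    rw [Finset.disjoint_left]
    intro e hei hej
    exact Set.disjoint_left.mp (hX.1 i j hij)
      (hvert i e hei e.out.1 (Sym2.out_fst_mem e))
      (hvert j e hej e.out.1 (Sym2.out_fst_mem e))
  have hsumM' : matchWeight w M' = ∑ i, matchWeight w (Mi i) :=
    Finset.sum_biUnion hdisj
  have h2 : ∑ i, util G w (X i) ≤ matchWeight w M := by
    calc ∑ i, util G w (X i) = ∑ i, matchWeight w (Mi i) :=
          Finset.sum_congr rfl fun i _ => hMieq i
      _ = matchWeight w M' := hsumM'.symm
      _ ≤ matchWeight w M := hM.2 M' hmatch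
  have hinf : ∀ i, (⨅ j, util G w (X j)) ≤ util G w (X i) := fun i =>
    ciInf_le (Set.Finite.bddBelow (Set.finite_range _)) i
  have hkey : (n + 1 : ℝ) * (⨅ j, util G w (X j)) ≤ (n + 1 : ℝ) * w e1 := by
    calc (n + 1 : ℝ) * (⨅ j, util G w (X j))
        = ∑ _i : Fin (n+1), (⨅ j, util G w (X j)) := by
          simp [Finset.sum_const, Finset.card_univ, nsmul_eq_mul]
      _ ≤ ∑ i, util G w (X i) := Finset.sum_le_sum fun i _ => hinf i
      _ ≤ matchWeight w M := h2
      _ ≤ (n + 1 : ℝ) * w e1 := hbound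
  have hpos : (0:ℝ) < n + 1 := by positivity
  exact le_of_mul_le_mul_left hkey hpos
end

section
/- For every n ≥ 2 and every ε with 0 < ε < 1 - 1/n, there is an instance with n agents and a graph consisting of n disjoint edges, in which every EF1 allocation has social welfare strictly less than (1/n + ε) times the maximum social welfare over all allocations. Specifically: agent 1 values each edge at 1 and all other agents value each edge at ε; the optimal social welfare is n, but any EF1 allocation gives agent 1 at most one edge, so its welfare is at most 1 + (n-1)ε. -/
open Finset

variable {V : Type*} [Fintype V] [DecidableEq V]

section Stmt7Aux

open scoped Classical

variable {m : ℕ}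

/-- the edge joining the two copies of `k` -/
def pairEdge (k : Fin (m + 2)) : Sym2 (Fin (m + 2) × Bool) := s((k, false), (k, true))

lemma pairEdge_injective : Function.Injective (pairEdge (m := m)) := by
  intro a b h
  have : ((a, false) : Fin (m + 2) × Bool) ∈ pairEdge b := h ▸ Sym2.mem_mk_left _ _
  rcases Sym2.mem_iff.mp this with h' | h' <;> exact congrArg Prod.fst h'

lemma edge_form {e : Sym2 (Fin (m + 2) × Bool)}
    (he : e ∈ (SimpleGraph.fromRel fun a b : Fin (m + 2) × Bool => a.1 = b.1).edgeSet) :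
    ∃ k, e = pairEdge k := by
  induction e using Sym2.ind with
  | _ a b =>
    rw [SimpleGraph.mem_edgeSet, SimpleGraph.fromRel_adj] at he
    obtain ⟨hne, h1⟩ := he
    obtain ⟨k, x⟩ := a
    obtain ⟨l, y⟩ := b
    have hkl : k = l := by rcases h1 with h | h; exacts [h, h.symm]
    subst hkl
    refine ⟨k, ?_⟩
    cases x <;> cases y <;> simp_all [pairEdge, Sym2.eq_swap]

/-- indices whose pair is fully inside `S` -/
noncomputable def pairSet (m : ℕ) (S : Set (Fin (m + 2) × Bool)) : Finset (Fin (m + 2)) :=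
  Finset.univ.filter fun k => ((k, false) : Fin (m + 2) × Bool) ∈ S ∧
    ((k, true) : Fin (m + 2) × Bool) ∈ S

lemma util_const (c : ℝ) (hc : 0 ≤ c) (S : Set (Fin (m + 2) × Bool)) :
    util (SimpleGraph.fromRel fun a b : Fin (m + 2) × Bool => a.1 = b.1)
      (fun _ => c) S = c * (pairSet m S).card := by
  have hinj := pairEdge_injective (m := m)
  set MS : Finset (Sym2 (Fin (m + 2) × Bool)) := (pairSet m S).image pairEdge with hMS
  have hmatch : IsMatchingOn (SimpleGraph.fromRel fun a b : Fin (m + 2) × Bool => a.1 = b.1)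
      S MS := by
    refine ⟨?_, ?_, ?_⟩
    · rintro e he
      obtain ⟨k, hk, rfl⟩ := Finset.mem_image.mp he
      rw [pairEdge, SimpleGraph.mem_edgeSet, SimpleGraph.fromRel_adj]
      exact ⟨by simp, Or.inl rfl⟩
    · rintro e he v hv
      obtain ⟨k, hk, rfl⟩ := Finset.mem_image.mp he
      rw [pairSet, Finset.mem_filter] at hk
      rcases Sym2.mem_iff.mp hv with rfl | rfl
      · exact hk.2.1
      · exact hk.2.2
    · rintro e he f hf hef v hv hvf
      obtain ⟨k, hk, rfl⟩ := Finset.mem_image.mp he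
      obtain ⟨l, hl, rfl⟩ := Finset.mem_image.mp hf
      have hkl : k ≠ l := fun h => hef (by rw [h])
      have h1 : v.1 = k := by rcases Sym2.mem_iff.mp hv with rfl | rfl <;> rfl
      have h2 : v.1 = l := by rcases Sym2.mem_iff.mp hvf with rfl | rfl <;> rfl
      exact hkl (h1 ▸ h2)
  have hw : matchWeight (fun _ => c) MS = c * (pairSet m S).card := by
    rw [matchWeight, Finset.sum_const, nsmul_eq_mul, hMS,
      Finset.card_image_of_injective _ hinj, mul_comm]
  refine IsGreatest.csSup_eq ⟨⟨MS, hmatch, hw.symm⟩, ?_⟩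
  rintro x ⟨M, hM, rfl⟩
  have hsub : M ⊆ MS := by
    intro e he
    obtain ⟨k, rfl⟩ := edge_form (hM.1 e he)
    have hkS : k ∈ pairSet m S := by
      rw [pairSet, Finset.mem_filter]
      refine ⟨Finset.mem_univ _, hM.2.1 _ he (k, false) ?_, hM.2.1 _ he (k, true) ?_⟩
      · rw [pairEdge]; exact Sym2.mem_mk_left _ _
      · rw [pairEdge]; exact Sym2.mem_mk_right _ _
    exact Finset.mem_image.mpr ⟨k, hkS, rfl⟩
  calc matchWeight (fun _ => c) M = c * M.card := by
        rw [matchWeight, Finset.sum_const, nsmul_eq_mul, mul_comm]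
    _ ≤ c * MS.card := by
        have := Finset.card_le_card hsub
        exact mul_le_mul_of_nonneg_left (by exact_mod_cast this) hc
    _ = c * (pairSet m S).card := by
        rw [hMS, Finset.card_image_of_injective _ hinj]

end Stmt7Aux

/-- for n = m+2 ≥ 2 agents and a graph of n disjoint edges, where
agent 0 values every edge 1 and the others value every edge ε (0 < ε < 1 - 1/n),
the optimal social welfare is n, but every EF1 allocation has welfare at most
1 + (n-1)ε < (1/n + ε)·n. -/
theorem stmt7 (m : ℕ) (ε : ℝ) (hε : 0 < ε) (hε2 : ε < 1 - 1 / ((m : ℝ) + 2))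
    (G : SimpleGraph (Fin (m + 2) × Bool))
    (hG : G = SimpleGraph.fromRel fun a b => a.1 = b.1)
    (w : Fin (m + 2) → Sym2 (Fin (m + 2) × Bool) → ℝ)
    (hw : w = fun i _ => if i = 0 then 1 else ε) :
    util G (w 0) Set.univ = (m : ℝ) + 2 ∧
    ∀ X : Fin (m + 2) → Set (Fin (m + 2) × Bool),
      IsPartition (m + 2) X → EF1Alloc G w X →
        (∑ i, util G (w i) (X i)) ≤ 1 + ((m : ℝ) + 1) * ε ∧
        (∑ i, util G (w i) (X i)) < (1 / ((m : ℝ) + 2) + ε) * (((m : ℝ) + 2)) := by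
  classical
  subst hG hw
  have hε1 : ε ≤ 1 := by
    have : (0 : ℝ) < 1 / ((m : ℝ) + 2) := by positivity
    linarith
  have hcw : ∀ i : Fin (m + 2), ∀ S : Set (Fin (m + 2) × Bool),
      util (SimpleGraph.fromRel fun a b : Fin (m + 2) × Bool => a.1 = b.1)
        ((fun i _ => if i = 0 then (1 : ℝ) else ε) i) S
        = (if i = 0 then (1 : ℝ) else ε) * (pairSet m S).card := by
    intro i S
    exact util_const (if i = 0 then (1 : ℝ) else ε) (by split <;> linarith) S
  constructor
  · rw [hcw 0 Set.univ]
    have : pairSet m (Set.univ : Set (Fin (m + 2) × Bool)) = Finset.univ := by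
      simp [pairSet]
    rw [this, if_pos rfl, one_mul]
    simp
  · intro X hpart hEF1
    set P : Fin (m + 2) → Finset (Fin (m + 2)) := fun i => pairSet m (X i) with hP
    have hu : ∀ i, util (SimpleGraph.fromRel fun a b : Fin (m + 2) × Bool => a.1 = b.1)
        ((fun i _ => if i = 0 then (1 : ℝ) else ε) i) (X i)
        = (if i = 0 then (1 : ℝ) else ε) * (P i).card := fun i => hcw i (X i)
    have hdisj : ∀ i j, i ≠ j → Disjoint (P i) (P j) := by
      intro i j hij
      rw [Finset.disjoint_left]
      intro k hki hkj
      rw [hP] at hki hkj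
      simp only [pairSet, Finset.mem_filter] at hki hkj
      exact Set.disjoint_left.mp (hpart.1 i j hij) hki.2.1 hkj.2.1
    have hsum : ∑ i, (P i).card ≤ m + 2 := by
      rw [← Finset.card_biUnion (fun i _ j _ hij => hdisj i j hij)]
      calc (Finset.univ.biUnion P).card ≤ (Finset.univ : Finset (Fin (m + 2))).card :=
            Finset.card_le_card (Finset.subset_univ _)
        _ = m + 2 := by simp
    have hsplit : (P 0).card + ∑ i ∈ Finset.univ.erase 0, (P i).card = ∑ i, (P i).card := by
      rw [add_comm]
      exact Finset.sum_erase_add _ _ (Finset.mem_univ 0)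
    -- key: agent 0's bundle has at most one complete pair
    have h0 : (P 0).card ≤ 1 := by
      by_contra h
      push_neg at h
      obtain ⟨k1, hk1, k2, hk2, hk12⟩ := Finset.one_lt_card.mp h
      -- some other agent has an empty pair set
      have hex : ∃ i : Fin (m + 2), i ≠ 0 ∧ P i = ∅ := by
        by_contra hall
        push_neg at hall
        have hone : ∀ i ∈ Finset.univ.erase (0 : Fin (m + 2)), 1 ≤ (P i).card := by
          intro i hi
          have hi0 : i ≠ 0 := (Finset.mem_erase.mp hi).1
          exact Finset.card_pos.mpr (hall i hi0)
        have hcard : (Finset.univ.erase (0 : Fin (m + 2))).card = m + 1 := by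
          rw [Finset.card_erase_of_mem (Finset.mem_univ _)]
          simp
        have : m + 1 ≤ ∑ i ∈ Finset.univ.erase (0 : Fin (m + 2)), (P i).card := by
          calc m + 1 = ∑ _i ∈ Finset.univ.erase (0 : Fin (m + 2)), 1 := by
                rw [Finset.sum_const, hcard, smul_eq_mul, mul_one]
            _ ≤ _ := Finset.sum_le_sum hone
        omega
      obtain ⟨i, hi0, hPi⟩ := hex
      obtain ⟨g, hg⟩ := hEF1 i 0 hi0
      rw [hu i, hPi, if_neg hi0] at hg
      simp only [Finset.card_empty, Nat.cast_zero, mul_zero] at hg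
      rw [hcw i (X 0 \ {g})] at hg
      -- find a pair of X 0 avoiding g
      have hmem : ∃ k, k ∈ pairSet m (X 0 \ {g}) := by
        refine ⟨if g.1 = k1 then k2 else k1, ?_⟩
        have hk : (if g.1 = k1 then k2 else k1) ∈ P 0 := by by_cases h' : g.1 = k1 <;> simp [h', hk1, hk2]
        have hgk : g.1 ≠ (if g.1 = k1 then k2 else k1) := by
          by_cases h' : g.1 = k1
          · rw [if_pos h']; exact fun hh => hk12 (h'.symm.trans hh)
          · rw [if_neg h']; exact h'
        rw [hP] at hk
        simp only [pairSet, Finset.mem_filter] at hk ⊢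
        refine ⟨Finset.mem_univ _, ⟨hk.2.1, ?_⟩, ⟨hk.2.2, ?_⟩⟩ <;>
          · simp only [Set.mem_singleton_iff]
            intro hh
            exact hgk (congrArg Prod.fst hh).symm
      obtain ⟨k, hk⟩ := hmem
      have hcard1 : 1 ≤ (pairSet m (X 0 \ {g})).card := Finset.card_pos.mpr ⟨k, hk⟩
      have : ε * 1 ≤ ε * (pairSet m (X 0 \ {g})).card :=
        mul_le_mul_of_nonneg_left (by exact_mod_cast hcard1) hε.le
      rw [if_neg hi0] at hg
      linarith
    -- compute the social welfare
    have hsum2 : (∑ i, util (SimpleGraph.fromRel fun a b : Fin (m + 2) × Bool => a.1 = b.1)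
        ((fun i _ => if i = 0 then (1 : ℝ) else ε) i) (X i))
        = ((P 0).card : ℝ) + ε * ∑ i ∈ Finset.univ.erase 0, ((P i).card : ℝ) := by
      rw [Finset.sum_congr rfl (fun i _ => hu i), ← Finset.sum_erase_add _ _ (Finset.mem_univ 0),
        if_pos rfl, one_mul, add_comm, Finset.mul_sum]
      congr 1
      exact Finset.sum_congr rfl fun i hi => by rw [if_neg (Finset.mem_erase.mp hi).1]
    have hA : ((P 0).card : ℝ) ≤ 1 := by exact_mod_cast h0
    have hA0 : (0 : ℝ) ≤ ((P 0).card : ℝ) := Nat.cast_nonneg _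
    have hB0 : (0 : ℝ) ≤ ∑ i ∈ Finset.univ.erase 0, ((P i).card : ℝ) :=
      Finset.sum_nonneg fun _ _ => Nat.cast_nonneg _
    have hAB : ((P 0).card : ℝ) + ∑ i ∈ Finset.univ.erase 0, ((P i).card : ℝ) ≤ (m : ℝ) + 2 := by
      have : ((P 0).card + ∑ i ∈ Finset.univ.erase 0, (P i).card : ℕ) ≤ m + 2 :=
        hsplit ▸ hsum
      exact_mod_cast this
    have hle : (∑ i, util (SimpleGraph.fromRel fun a b : Fin (m + 2) × Bool => a.1 = b.1)
        ((fun i _ => if i = 0 then (1 : ℝ) else ε) i) (X i)) ≤ 1 + ((m : ℝ) + 1) * ε := by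
      rw [hsum2]
      nlinarith [mul_nonneg (sub_nonneg.mpr hε1) (sub_nonneg.mpr hA),
        mul_nonneg hε.le (sub_nonneg.mpr hAB)]
    refine ⟨hle, ?_⟩
    have hne : ((m : ℝ) + 2) ≠ 0 := by positivity
    have hexp : (1 / ((m : ℝ) + 2) + ε) * ((m : ℝ) + 2) = 1 + ε * ((m : ℝ) + 2) := by
      field_simp
    rw [hexp]
    nlinarith
end
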